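/- arXiv:2502.04652 — 7 statements merged into one kernel-verified Lean document; each statement's English description precedes it below -/
import Mathlib

section
/- Let A, B, X, R be real n×n matrices, let m be the index of A, and set S = Σ_{i=1}^{m} A^{m-i} B A^{i-1}. The dual matrix X + εR satisfies the three dual core-EP equations ((Â X̂)^T = Â X̂, Â X̂² = X̂, X̂ Â^{m+1} = Â^m) for Â = A + εB if and only if X equals the (real) core-EP inverse A^⊕ of A and R satisfies the three real-matrix equations: (AR + B A^⊕)^T = AR + B A^⊕; B (A^⊕)² + A A^⊕ R + A R A^⊕ = R; and R A^{m+1} + A^⊕ A S + A^⊕ B A^m = S. -/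
open Matrix

abbrev Mat (n : ℕ) := Matrix (Fin n) (Fin n) ℝ

/-- A dual matrix `A + ε B` represented as the pair `(A, B)`. -/
abbrev DM (n : ℕ) := Mat n × Mat n

/-- Dual matrix multiplication: `(A+εB)(C+εD) = AC + ε(AD+BC)`. -/
def dmul {n : ℕ} (X Y : DM n) : DM n := (X.1 * Y.1, X.1 * Y.2 + X.2 * Y.1)

/-- Componentwise transpose of a dual matrix. -/
def dT {n : ℕ} (X : DM n) : DM n := (X.1ᵀ, X.2ᵀ)

/-- Powers of a dual matrix. -/
def dpow {n : ℕ} (X : DM n) : ℕ → DM n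
  | 0 => (1, 0)
  | k+1 => dmul X (dpow X k)

/-- `m` is the index of `A`: the least `m` with `rank (A^(m+1)) = rank (A^m)`. -/
def MatIndex {n : ℕ} (A : Mat n) (m : ℕ) : Prop :=
  (A ^ (m+1)).rank = (A ^ m).rank ∧ ∀ k < m, (A ^ (k+1)).rank ≠ (A ^ k).rank

/-- `X` is the core-EP inverse of `A` (with `m` the index of `A`). -/
def IsCEP {n : ℕ} (m : ℕ) (A X : Mat n) : Prop :=
  (A * X)ᵀ = A * X ∧ A * (X * X) = X ∧ X * A ^ (m+1) = A ^ m

/-- `Xh` is a dual core-EP inverse of the dual matrix `Ah`. -/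
def IsDualCEP {n : ℕ} (m : ℕ) (Ah Xh : DM n) : Prop :=
  dT (dmul Ah Xh) = dmul Ah Xh ∧ dmul Ah (dmul Xh Xh) = Xh ∧
    dmul Xh (dpow Ah (m+1)) = dpow Ah m

/-! Comparing real and dual parts, the three dual core-EP equations split into the real
core-EP equations for `A` and three linear equations for `R`; the only input is that the dual
part `S` of `Âᵐ` satisfies the recursion `dual part of Âᵐ⁺¹ = A S + B Aᵐ`. -/

theorem sum_range_succ_pow_mul_pow {R : Type*} [Semiring R] (a b : R) (k : ℕ) :
    ∑ i ∈ Finset.range (k + 1), a ^ (k + 1 - 1 - i) * b * a ^ i =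
      a * ∑ i ∈ Finset.range k, a ^ (k - 1 - i) * b * a ^ i + b * a ^ k := by
  rw [Finset.sum_range_succ, Finset.mul_sum, Nat.add_sub_cancel, Nat.sub_self, pow_zero, one_mul]
  congr 1
  refine Finset.sum_congr rfl fun i hi => ?_
  rw [Finset.mem_range] at hi
  rw [show k - i = k - 1 - i + 1 by omega, pow_succ', mul_assoc, mul_assoc, mul_assoc]

theorem dpow_mk {n : ℕ} (A B : Mat n) (k : ℕ) :
    dpow (A, B) k = (A ^ k, ∑ i ∈ Finset.range k, A ^ (k - 1 - i) * B * A ^ i) := by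
  induction k with
  | zero => simp [dpow]
  | succ k ih => rw [dpow, ih, dmul, sum_range_succ_pow_mul_pow, pow_succ']

theorem stmt0_general {n m : ℕ} (A B X R : Mat n)
    (S : Mat n) (hS : S = ∑ i ∈ Finset.range m, A ^ (m - 1 - i) * B * A ^ i) :
    IsDualCEP m (A, B) (X, R) ↔
      (IsCEP m A X ∧
        (A * R + B * X)ᵀ = A * R + B * X ∧
        B * (X * X) + A * X * R + A * R * X = R ∧
        R * A ^ (m+1) + X * A * S + X * B * A ^ m = S) := by
  simp only [IsDualCEP, IsCEP, dmul, dT, dpow_mk, sum_range_succ_pow_mul_pow, ← hS,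
    Prod.ext_iff]
  have hsquare : A * (X * R + R * X) + B * (X * X) = B * (X * X) + A * X * R + A * R * X := by
    noncomm_ring
  have hpower : X * (A * S + B * A ^ m) + R * A ^ (m + 1) =
      R * A ^ (m + 1) + X * A * S + X * B * A ^ m := by
    noncomm_ring
  rw [hsquare, hpower]
  tauto

theorem stmt0 {n m : ℕ} (A B X R : Mat n) (hm : MatIndex A m)
    (S : Mat n) (hS : S = ∑ i ∈ Finset.range m, A ^ (m - 1 - i) * B * A ^ i) :
    IsDualCEP m (A, B) (X, R) ↔
      (IsCEP m A X ∧
        (A * R + B * X)ᵀ = A * R + B * X ∧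
        B * (X * X) + A * X * R + A * R * X = R ∧
        R * A ^ (m+1) + X * A * S + X * B * A ^ m = S) :=
  stmt0_general A B X R S hS
end

section
/- Let Â = A + εB be a dual real n×n matrix with index of A equal to m. If X̂₁ and X̂₂ are both dual core-EP inverses of Â (i.e., both satisfy (Â X̂)^T = Â X̂, Â X̂² = X̂, and X̂ Â^{m+1} = Â^m), then X̂₁ = X̂₂. That is, the dual core-EP inverse is unique whenever it exists. -/
open Matrix

/-!
The real parts of two dual core-EP inverses are core-EP inverses of `A`, and these are unique:
`A X₁` and `A X₂` are symmetric idempotents absorbing each other, hence equal, and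
`X = X (A X)`. The dual parts then differ by some `Z` with `A Z` symmetric,
`A (X Z + Z X) = Z` and `Z A^(m+1) = 0`. Multiplying the middle identity by `A^(m+1)` gives
`A Z A^m = 0`, hence `A Z X = 0` and `Z = A X Z = A^(m+1) (X^(m+1) Z)`. So `W = A Z` is
symmetric, lies in the column space of `A^m` and is killed by `A^m` on the right, which forces
`Wᵀ W = 0`. Finally `A^(m+2) (X^(m+1) Z) = 0`, and since `A^(m+1)` and `A^m` have the same kernel
(the index hypothesis), `Z = 0`.
-/

section CoreEPIdentities

variable {M : Type*} [Monoid M] {a x y : M}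

theorem pow_mul_pow_succ_of_mul_mul_self (h : a * (x * x) = x) (k : ℕ) :
    a ^ k * x ^ (k + 1) = x := by
  induction k with
  | zero => simp
  | succ k ih =>
    calc a ^ (k + 1) * x ^ (k + 1 + 1) = a * (a ^ k * x ^ (k + 1)) * x := by
          rw [pow_succ' a, pow_succ x]; simp only [mul_assoc]
      _ = x := by rw [ih, mul_assoc, h]

theorem mul_eq_pow_succ_mul_pow_succ_of_mul_mul_self (h : a * (x * x) = x) (k : ℕ) :
    a * x = a ^ (k + 1) * x ^ (k + 1) := by
  conv_lhs => rw [← pow_mul_pow_succ_of_mul_mul_self h k]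
  rw [pow_succ' a, mul_assoc]

theorem mul_mul_eq_of_mul_pow_succ {m : ℕ} (hx : x * a ^ (m + 1) = a ^ m)
    (hy : a * (y * y) = y) : x * (a * y) = y := by
  rw [mul_eq_pow_succ_mul_pow_succ_of_mul_mul_self hy m, ← mul_assoc, hx,
    pow_mul_pow_succ_of_mul_mul_self hy]

end CoreEPIdentities

section DualPartIdentities

variable {R : Type*} [Ring R] {a x z : R} {m : ℕ}

theorem mul_mul_pow_eq_zero_of_dual_part (hx : x * a ^ (m + 1) = a ^ m)
    (hz : a * (x * z) + a * (z * x) = z) (hza : z * a ^ (m + 1) = 0) :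
    a * z * a ^ m = 0 := by
  have := congrArg (· * a ^ (m + 1)) hz
  simp only [add_mul, mul_assoc, hza, hx, mul_zero, zero_add] at this
  rw [mul_assoc, this]

theorem mul_mul_eq_of_dual_part (hxx : a * (x * x) = x) (hx : x * a ^ (m + 1) = a ^ m)
    (hz : a * (x * z) + a * (z * x) = z) (hza : z * a ^ (m + 1) = 0) :
    a * (x * z) = z := by
  have hzx : a * (z * x) = 0 := by
    rw [← pow_mul_pow_succ_of_mul_mul_self hxx m, ← mul_assoc, ← mul_assoc,
      mul_mul_pow_eq_zero_of_dual_part hx hz hza, zero_mul]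
  rwa [hzx, add_zero] at hz

end DualPartIdentities

namespace Matrix

theorem eq_zero_of_isSymm_of_mul_eq_zero_of_eq_mul {ι κ : Type*} [Fintype ι] [Fintype κ]
    {W : Matrix ι ι ℝ} {P : Matrix ι κ ℝ} {C : Matrix κ ι ℝ} (hW : W.IsSymm)
    (hWP : W * P = 0) (hPC : W = P * C) : W = 0 := by
  have hPW : Pᵀ * W = 0 := by rw [← hW.eq, ← transpose_mul, hWP, transpose_zero]
  rw [← conjTranspose_mul_self_eq_zero, conjTranspose_eq_transpose_of_trivial]
  nth_rw 1 [hPC]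
  rw [transpose_mul, Matrix.mul_assoc, hPW, Matrix.mul_zero]

theorem pow_mul_eq_zero_of_rank_pow_succ_eq {K ι κ : Type*} [Field K] [Fintype ι] [Fintype κ]
    [DecidableEq ι] {A : Matrix ι ι K} {C : Matrix ι κ K} {m : ℕ}
    (hA : (A ^ (m + 1)).rank = (A ^ m).rank) (hC : A ^ (m + 1) * C = 0) : A ^ m * C = 0 := by
  have hker : LinearMap.ker (A ^ m).mulVecLin = LinearMap.ker (A ^ (m + 1)).mulVecLin := by
    refine Submodule.eq_of_le_of_finrank_eq ?_ ?_
    · rw [pow_succ', mulVecLin_mul]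
      exact LinearMap.ker_le_ker_comp _ _
    · have h1 := LinearMap.finrank_range_add_finrank_ker (A ^ (m + 1)).mulVecLin
      have h2 := LinearMap.finrank_range_add_finrank_ker (A ^ m).mulVecLin
      rw [rank, rank] at hA
      omega
  refine ext_iff_mulVec.mpr fun v => ?_
  have hv : C *ᵥ v ∈ LinearMap.ker (A ^ (m + 1)).mulVecLin := by
    simp [mulVec_mulVec, hC]
  rw [← hker] at hv
  simpa [mulVec_mulVec] using hv

end Matrix

theorem dpow_fst {n : ℕ} (A B : Mat n) : ∀ k, (dpow (A, B) k).1 = A ^ k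
  | 0 => rfl
  | k + 1 => by rw [dpow, dmul, dpow_fst A B k, pow_succ']

theorem isDualCEP_iff {n m : ℕ} {A B X Y : Mat n} :
    IsDualCEP m (A, B) (X, Y) ↔ IsCEP m A X ∧ (A * Y + B * X)ᵀ = A * Y + B * X ∧
      A * (X * Y + Y * X) + B * (X * X) = Y ∧
      X * (dpow (A, B) (m + 1)).2 + Y * A ^ (m + 1) = (dpow (A, B) m).2 := by
  simp only [IsDualCEP, IsCEP, dmul, dT, Prod.ext_iff, dpow_fst]
  tauto

theorem IsCEP.unique {n m : ℕ} {A X Y : Mat n} (hX : IsCEP m A X) (hY : IsCEP m A Y) :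
    X = Y := by
  obtain ⟨hXs, hXX, hXp⟩ := hX
  obtain ⟨hYs, hYY, hYp⟩ := hY
  have hXY : A * X * (A * Y) = A * Y := by rw [mul_assoc, mul_mul_eq_of_mul_pow_succ hXp hYY]
  have hYX : A * Y * (A * X) = A * X := by rw [mul_assoc, mul_mul_eq_of_mul_pow_succ hYp hXX]
  have hAXY : A * X = A * Y :=
    calc A * X = (A * Y * (A * X))ᵀ := by rw [hYX, hXs]
      _ = A * X * (A * Y) := by rw [transpose_mul, hXs, hYs]
      _ = A * Y := hXY
  rw [← mul_mul_eq_of_mul_pow_succ hXp hXX, hAXY, mul_mul_eq_of_mul_pow_succ hXp hYY]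

theorem eq_zero_of_isCEP_of_dual_part {n m : ℕ} {A X Z : Mat n}
    (hA : (A ^ (m + 1)).rank = (A ^ m).rank) (hX : IsCEP m A X) (hZs : (A * Z).IsSymm)
    (hz : A * (X * Z) + A * (Z * X) = Z) (hza : Z * A ^ (m + 1) = 0) : Z = 0 := by
  obtain ⟨-, hXX, hXp⟩ := hX
  have hZ : Z = A ^ (m + 1) * (X ^ (m + 1) * Z) := by
    rw [← mul_assoc, ← mul_eq_pow_succ_mul_pow_succ_of_mul_mul_self hXX, mul_assoc,
      mul_mul_eq_of_dual_part hXX hXp hz hza]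
  have hAZ : A * Z = 0 := by
    refine Matrix.eq_zero_of_isSymm_of_mul_eq_zero_of_eq_mul hZs
      (mul_mul_pow_eq_zero_of_dual_part hXp hz hza) (C := A ^ 2 * (X ^ (m + 1) * Z)) ?_
    conv_lhs => rw [hZ]
    rw [← mul_assoc, ← pow_succ', ← mul_assoc (A ^ m), ← pow_add]
  have hAZ' : A ^ (m + 1) * (A * (X ^ (m + 1) * Z)) = 0 := by
    rw [← mul_assoc, ← pow_succ, pow_succ', mul_assoc, ← hZ, hAZ]
  rw [hZ, pow_succ, mul_assoc]
  exact Matrix.pow_mul_eq_zero_of_rank_pow_succ_eq hA hAZ'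

theorem IsDualCEP.dual_part_sub {n m : ℕ} {A B X Y₁ Y₂ : Mat n}
    (h₁ : IsDualCEP m (A, B) (X, Y₁)) (h₂ : IsDualCEP m (A, B) (X, Y₂)) :
    (A * (Y₁ - Y₂)).IsSymm ∧ A * (X * (Y₁ - Y₂)) + A * ((Y₁ - Y₂) * X) = Y₁ - Y₂ ∧
      (Y₁ - Y₂) * A ^ (m + 1) = 0 := by
  obtain ⟨-, hs₁, hr₁, hp₁⟩ := isDualCEP_iff.mp h₁
  obtain ⟨-, hs₂, hr₂, hp₂⟩ := isDualCEP_iff.mp h₂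
  refine ⟨?_, ?_, ?_⟩
  · rw [show A * (Y₁ - Y₂) = (A * Y₁ + B * X) - (A * Y₂ + B * X) by noncomm_ring]
    exact IsSymm.sub hs₁ hs₂
  · calc A * (X * (Y₁ - Y₂)) + A * ((Y₁ - Y₂) * X)
        = (A * (X * Y₁ + Y₁ * X) + B * (X * X)) - (A * (X * Y₂ + Y₂ * X) + B * (X * X)) := by
          noncomm_ring
      _ = Y₁ - Y₂ := by rw [hr₁, hr₂]
  · calc (Y₁ - Y₂) * A ^ (m + 1)
        = (X * (dpow (A, B) (m + 1)).2 + Y₁ * A ^ (m + 1))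
          - (X * (dpow (A, B) (m + 1)).2 + Y₂ * A ^ (m + 1)) := by noncomm_ring
      _ = 0 := by rw [hp₁, hp₂, sub_self]

theorem stmt1 {n m : ℕ} (A B : Mat n) (hm : MatIndex A m)
    (X1 X2 : DM n) (h1 : IsDualCEP m (A, B) X1) (h2 : IsDualCEP m (A, B) X2) :
    X1 = X2 := by
  obtain ⟨X, Y₁⟩ := X1
  obtain ⟨X', Y₂⟩ := X2
  obtain rfl : X = X' := (isDualCEP_iff.mp h1).1.unique (isDualCEP_iff.mp h2).1
  obtain ⟨hZs, hz, hza⟩ := h1.dual_part_sub h2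
  rw [sub_eq_zero.mp (eq_zero_of_isCEP_of_dual_part hm.1 (isDualCEP_iff.mp h1).1 hZs hz hza)]
end

section
/- There exists a dual real square matrix that admits no dual core-EP inverse. Concretely, for A = [[1,2,-2],[0,0,-2],[0,0,0]] and B = [[1,5,-2],[0,3,-2],[2,0,4]], the dual matrix Â = A + εB has no dual core-EP inverse. -/
open Matrix

/-!
The real part `X` of a dual core-EP inverse satisfies `X = Aᵐ Xᵐ⁺¹`, so every left null vector `u`
of `Aᵐ` annihilates `X`. Sandwiching the dual part `X (Âᵐ⁺¹)_ε + Y Aᵐ⁺¹ = (Âᵐ)_ε` of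
`X̂ Âᵐ⁺¹ = Âᵐ` between `u` and a null vector `v` of `Aᵐ⁺¹` eliminates both unknowns and leaves
`u (Âᵐ)_ε v = 0`, which for `m = 2` reads `u (AB + BA) v = 0`. Here `u = (0, 1, 0)` and `v = (2, -1, 0)`
give `u (AB + BA) v = -8`.
-/

theorem dpow_fst_s2 {n : ℕ} (X : DM n) (k : ℕ) : (dpow X k).1 = X.1 ^ k := by
  induction k with
  | zero => rfl
  | succ k ih => simp only [dpow, dmul, ih, pow_succ']

theorem eq_pow_mul_pow_succ_of_mul_mul_self_eq {M : Type*} [Monoid M] {a x : M}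
    (h : a * (x * x) = x) (k : ℕ) : x = a ^ k * x ^ (k + 1) := by
  induction k with
  | zero => simp
  | succ k ih =>
    have hx : x ^ (k + 1) = a * x ^ (k + 2) := by
      calc x ^ (k + 1) = a * (x * x) * x ^ k := by rw [h, pow_succ']
        _ = a * x ^ (k + 2) := by simp only [pow_succ', mul_assoc]
    calc x = a ^ k * x ^ (k + 1) := ih
      _ = a ^ (k + 1) * x ^ (k + 2) := by rw [hx, ← mul_assoc, ← pow_succ]

theorem IsDualCEP.dotProduct_snd_dpow_mulVec_eq_zero {n m : ℕ} {Ah Xh : DM n}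
    (h : IsDualCEP m Ah Xh) {u v : Fin n → ℝ} (hu : u ᵥ* Ah.1 ^ m = 0)
    (hv : Ah.1 ^ (m + 1) *ᵥ v = 0) : u ⬝ᵥ ((dpow Ah m).2 *ᵥ v) = 0 := by
  obtain ⟨-, hidem, hpow⟩ := h
  have huX : u ᵥ* Xh.1 = 0 := by
    rw [eq_pow_mul_pow_succ_of_mul_mul_self_eq (congrArg Prod.fst hidem) m, ← vecMul_vecMul,
      hu, zero_vecMul]
  have hdual : Xh.1 * (dpow Ah (m + 1)).2 + Xh.2 * Ah.1 ^ (m + 1) = (dpow Ah m).2 := by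
    simpa only [dmul, dpow_fst_s2] using congrArg Prod.snd hpow
  rw [← hdual, add_mulVec, dotProduct_add, ← mulVec_mulVec, ← mulVec_mulVec, hv, mulVec_zero,
    dotProduct_zero, add_zero, dotProduct_mulVec, huX, zero_dotProduct]

section Example

local notation "𝔸" => (!![1, 2, -2; 0, 0, -2; 0, 0, 0] : Mat 3)

local notation "𝔹" => (!![1, 5, -2; 0, 3, -2; 2, 0, 4] : Mat 3)

theorem rank_A : (𝔸).rank = 2 := by
  apply le_antisymm
  · refine (rank_le_card_of_support_subset _ {0, 1} ?_).trans (by simp)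
    intro i hi
    fin_cases i <;> simp_all [Function.mem_support]
  · calc 2 = (!![1, -2; 0, -2] : Matrix (Fin 2) (Fin 2) ℝ).rank := by
          rw [rank_of_det_ne_zero (by simp [det_fin_two]), Fintype.card_fin]
      _ ≤ (𝔸).rank := by
          convert rank_submatrix_le 𝔸 ![0, 1] ![0, 2]
          ext i j
          fin_cases i <;> fin_cases j <;> rfl

theorem A_sq : 𝔸 ^ 2 = !![1, 2, -6; 0, 0, 0; 0, 0, 0] := by
  rw [pow_two, mul_fin_three]
  norm_num

theorem A_pow_three : 𝔸 ^ 3 = 𝔸 ^ 2 := by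
  rw [pow_succ, A_sq, mul_fin_three]
  norm_num

theorem rank_A_sq_le : (𝔸 ^ 2).rank ≤ 1 := by
  refine (rank_le_card_of_support_subset _ {0} ?_).trans (by simp)
  intro i hi
  fin_cases i <;> simp_all [A_sq, Function.mem_support]

theorem matIndex_A : MatIndex 𝔸 2 := by
  refine ⟨by rw [A_pow_three], fun k hk => ?_⟩
  interval_cases k
  · simp [rank_A]
  · show (𝔸 ^ 2).rank ≠ (𝔸 ^ 1).rank
    have := rank_A_sq_le
    rw [pow_one, rank_A]
    omega

theorem vecMul_A_sq : ![0, 1, 0] ᵥ* 𝔸 ^ 2 = 0 := by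
  rw [A_sq]
  ext i
  fin_cases i <;> simp [vecMul, dotProduct, Fin.sum_univ_three]

theorem A_mulVec : 𝔸 *ᵥ ![2, -1, 0] = 0 := by
  ext i
  fin_cases i <;> simp [mulVec, dotProduct, Fin.sum_univ_three]

theorem dotProduct_snd_dpow_two_mulVec_ne_zero :
    ![0, 1, 0] ⬝ᵥ ((dpow (𝔸, 𝔹) 2).2 *ᵥ ![2, -1, 0]) ≠ 0 := by
  simp [dpow, dmul, mulVec, dotProduct, Fin.sum_univ_three]

end Example

theorem stmt2 :
    MatIndex (!![1, 2, -2; 0, 0, -2; 0, 0, 0] : Mat 3) 2 ∧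
    ¬ ∃ Xh : DM 3,
        IsDualCEP 2
          ((!![1, 2, -2; 0, 0, -2; 0, 0, 0] : Mat 3),
           (!![1, 5, -2; 0, 3, -2; 2, 0, 4] : Mat 3)) Xh := by
  refine ⟨matIndex_A, fun ⟨Xh, h⟩ => dotProduct_snd_dpow_two_mulVec_ne_zero ?_⟩
  refine h.dotProduct_snd_dpow_mulVec_eq_zero vecMul_A_sq ?_
  rw [pow_succ, ← mulVec_mulVec, A_mulVec, mulVec_zero]
end

section
/- Let Â = A + εB be a dual real n×n matrix with index of A equal to m, and let S = Σ_{i=1}^m A^{m-i} B A^{i-1}. If the dual core-EP inverse of Â exists, then (I − A^m (A^m)^⊕) S (I − (A^m)^⊕ A^m) = O, where (A^m)^⊕ denotes the core-EP inverse of A^m (which, since A^m has index ≤ 1, coincides with the core inverse). -/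
open Matrix

/- The core-inverse equations alone give `Aᵐ G Aᵐ = Aᵐ`, so `1 - Aᵐ G` kills `Aᵐ` on the left and
`1 - G Aᵐ` kills `Aᵐ` on the right. Writing the dual core-EP inverse as `X + εY`, the real part of
`Â X̂² = X̂` gives `X = Aᵐ Xᵐ⁺¹`, while the ε-part of `X̂ Âᵐ⁺¹ = Âᵐ` expresses `S` as
`X Sₘ₊₁ + Y Aᵐ⁺¹`; both summands vanish after multiplying by the two projectors. -/

theorem mul_mul_eq_self_of_mul_sq_eq {M : Type*} [Monoid M] {a x : M}
    (hxa : x * (a * a) = a) (hax : a * (x * x) = x) : a * x * a = a :=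
  calc a * x * a = a * x * (x * (a * a)) := by rw [hxa]
    _ = a * (x * x) * (a * a) := by simp only [mul_assoc]
    _ = a := by rw [hax, hxa]

theorem pow_mul_pow_succ_eq_self {M : Type*} [Monoid M] {a x : M} (h : a * (x * x) = x) :
    ∀ k : ℕ, a ^ k * x ^ (k + 1) = x
  | 0 => by simp
  | k + 1 =>
    calc a ^ (k + 1) * x ^ (k + 1 + 1) = a ^ k * (a * (x * x)) * x ^ k := by
          rw [pow_succ a, pow_succ' x, pow_succ' x]; simp only [mul_assoc]
      _ = a ^ k * x ^ (k + 1) := by rw [h, mul_assoc, ← pow_succ']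
      _ = x := pow_mul_pow_succ_eq_self h k

theorem stmt3_general {n m : ℕ} (A B : Mat n)
    (S : Mat n) (hS : S = ∑ i ∈ Finset.range m, A ^ (m - 1 - i) * B * A ^ i)
    (G : Mat n) (hG : IsCEP 1 (A ^ m) G)
    (hex : ∃ Xh : DM n, IsDualCEP m (A, B) Xh) :
    (1 - A ^ m * G) * S * (1 - G * A ^ m) = 0 := by
  obtain ⟨⟨X, Y⟩, -, hXX, hXA⟩ := hex
  rw [dpow_mk, dpow_mk] at hXA
  set T := ∑ i ∈ Finset.range (m + 1), A ^ (m + 1 - 1 - i) * B * A ^ i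
  have hX : A * (X * X) = X := congrArg Prod.fst hXX
  have hSXY : X * T + Y * A ^ (m + 1) = S := hS ▸ congrArg Prod.snd hXA
  have hAGA : A ^ m * G * A ^ m = A ^ m := by
    refine mul_mul_eq_self_of_mul_sq_eq ?_ hG.2.1
    simpa only [pow_succ, pow_zero, one_mul] using hG.2.2
  have hleft : (1 - A ^ m * G) * X = 0 := by
    rw [← pow_mul_pow_succ_eq_self hX m, ← mul_assoc, sub_mul, one_mul, hAGA, sub_self, zero_mul]
  have hright : A ^ (m + 1) * (1 - G * A ^ m) = 0 := by
    rw [pow_succ', mul_assoc, mul_sub, mul_one, ← mul_assoc, hAGA, sub_self, mul_zero]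
  calc (1 - A ^ m * G) * S * (1 - G * A ^ m)
      = (1 - A ^ m * G) * X * (T * (1 - G * A ^ m))
        + (1 - A ^ m * G) * Y * (A ^ (m + 1) * (1 - G * A ^ m)) := by
        rw [← hSXY]; noncomm_ring
    _ = 0 := by rw [hleft, hright, zero_mul, mul_zero, add_zero]

theorem stmt3 {n m : ℕ} (A B : Mat n) (hm : MatIndex A m)
    (S : Mat n) (hS : S = ∑ i ∈ Finset.range m, A ^ (m - 1 - i) * B * A ^ i)
    (G : Mat n) (hG : IsCEP 1 (A ^ m) G)
    (hex : ∃ Xh : DM n, IsDualCEP m (A, B) Xh) :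
    (1 - A ^ m * G) * S * (1 - G * A ^ m) = 0 :=
  stmt3_general A B S hS G hG hex
end

section
/- Let A be a real n×n matrix with index m. Then the core-EP inverse of A satisfies A^⊕ = A^D A^m (A^m)^†, where A^D is the Drazin inverse and (A^m)^† is the Moore–Penrose inverse of A^m. -/
/-! A core-EP inverse `x` of `a` is an outer inverse with `x = a ^ m * x ^ (m + 1)`, and the
projection `a * x` is self-adjoint with `(a * x) * (a * y) = a * y` for any two core-EP inverses
`x`, `y`. Taking adjoints gives `a * x = a * y`, hence `x = y`: the core-EP inverse is unique.
So it suffices to check that `d * a ^ m * p` satisfies the defining equations, which follows from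
`a * (d * a ^ m * p) = a ^ m * p`, a self-adjoint projection since `p` is the Moore–Penrose inverse
of `a ^ m`. -/

open Matrix

/-- `X` is the Drazin inverse of `A` (with `m` the index of `A`). -/
def IsDrazin {n : ℕ} (m : ℕ) (A X : Mat n) : Prop :=
  X * A ^ (m+1) = A ^ m ∧ X * A * X = X ∧ A * X = X * A

/-- `X` is the Moore-Penrose inverse of `M`. -/
def IsMP {n : ℕ} (M X : Mat n) : Prop :=
  M * X * M = M ∧ X * M * X = X ∧ (M * X)ᵀ = M * X ∧ (X * M)ᵀ = X * M

structure IsCoreEPInverse {R : Type*} [Monoid R] [StarMul R] (m : ℕ) (a x : R) : Prop where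
  isSelfAdjoint_mul : IsSelfAdjoint (a * x)
  mul_mul_self : a * (x * x) = x
  mul_pow_succ : x * a ^ (m + 1) = a ^ m

namespace IsCoreEPInverse

variable {R : Type*} [Monoid R] [StarMul R] {m : ℕ} {a x y : R}

theorem pow_mul_pow_succ (h : IsCoreEPInverse m a x) (k : ℕ) : a ^ k * x ^ (k + 1) = x := by
  induction k with
  | zero => simp
  | succ k ih =>
    have hstep : a * x ^ (k + 2) = x ^ (k + 1) := by
      rw [pow_succ' x (k + 1), pow_succ' x k, ← mul_assoc x, ← mul_assoc, h.mul_mul_self,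
        ← pow_succ']
    rw [pow_succ, mul_assoc, hstep, ih]

theorem pow_succ_mul_pow_succ (h : IsCoreEPInverse m a x) (k : ℕ) :
    a ^ (k + 1) * x ^ (k + 1) = a * x := by
  rw [pow_succ', mul_assoc, h.pow_mul_pow_succ]

theorem mul_mul_mul_self (h : IsCoreEPInverse m a x) : x * a * x = x := by
  nth_rewrite 2 [← h.pow_mul_pow_succ m]
  rw [mul_assoc, ← mul_assoc a, ← pow_succ', ← mul_assoc, h.mul_pow_succ, h.pow_mul_pow_succ]

theorem mul_mul_mul (hx : IsCoreEPInverse m a x) (hy : IsCoreEPInverse m a y) :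
    a * x * (a * y) = a * y := by
  rw [← hy.pow_succ_mul_pow_succ m, ← mul_assoc, mul_assoc a x, hx.mul_pow_succ, ← pow_succ',
    hy.pow_succ_mul_pow_succ]

theorem mul_eq_mul (hx : IsCoreEPInverse m a x) (hy : IsCoreEPInverse m a y) :
    a * x = a * y := by
  have h := congrArg star (hx.mul_mul_mul hy)
  rwa [star_mul, hx.isSelfAdjoint_mul.star_eq, hy.isSelfAdjoint_mul.star_eq,
    hy.mul_mul_mul hx] at h

theorem eq (hx : IsCoreEPInverse m a x) (hy : IsCoreEPInverse m a y) : x = y :=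
  calc x = a ^ m * x ^ (m + 1) := (hx.pow_mul_pow_succ m).symm
    _ = y * (a ^ (m + 1) * x ^ (m + 1)) := by rw [← mul_assoc, hy.mul_pow_succ]
    _ = y * (a * y) := by rw [hx.pow_succ_mul_pow_succ, hx.mul_eq_mul hy]
    _ = y := by rw [← mul_assoc, hy.mul_mul_mul_self]

end IsCoreEPInverse

section DrazinMoorePenrose

variable {R : Type*} [Monoid R] {m : ℕ} {a d p : R}

theorem mul_drazin_mul_pow_mul (hd : d * a ^ (m + 1) = a ^ m) (hda : Commute a d) :
    a * (d * a ^ m * p) = a ^ m * p := by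
  rw [← mul_assoc, ← mul_assoc, hda.eq, mul_assoc d, ← pow_succ', hd]

theorem isCoreEPInverse_drazin_mul_pow_mul [StarMul R] (hd : d * a ^ (m + 1) = a ^ m)
    (hda : Commute a d) (hp : a ^ m * p * a ^ m = a ^ m) (hsa : IsSelfAdjoint (a ^ m * p)) :
    IsCoreEPInverse m a (d * a ^ m * p) where
  isSelfAdjoint_mul := by rwa [mul_drazin_mul_pow_mul hd hda]
  mul_mul_self := by
    rw [← mul_assoc, mul_drazin_mul_pow_mul hd hda, ← (hda.pow_left m).eq,
      ← mul_assoc, ← mul_assoc, hp]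
  mul_pow_succ := by
    rw [pow_succ, ← mul_assoc, mul_assoc d, mul_assoc d, hp, mul_assoc, ← pow_succ, hd]

end DrazinMoorePenrose

theorem Matrix.isSelfAdjoint_iff_transpose_eq {ι α : Type*} [Star α] [TrivialStar α]
    (M : Matrix ι ι α) : IsSelfAdjoint M ↔ Mᵀ = M := by
  rw [IsSelfAdjoint, star_eq_conjTranspose, conjTranspose_eq_transpose_of_trivial]

theorem IsCEP.isCoreEPInverse {n m : ℕ} {A X : Mat n} (h : IsCEP m A X) :
    IsCoreEPInverse m A X :=
  ⟨(isSelfAdjoint_iff_transpose_eq _).2 h.1, h.2.1, h.2.2⟩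

theorem stmt7_general {n m : ℕ} (A D P C : Mat n)
    (hD : IsDrazin m A D) (hP : IsMP (A ^ m) P) (hC : IsCEP m A C) :
    C = D * A ^ m * P := by
  obtain ⟨hD_pow, -, hD_comm⟩ := hD
  obtain ⟨hP_mul, -, hP_symm, -⟩ := hP
  exact hC.isCoreEPInverse.eq <| isCoreEPInverse_drazin_mul_pow_mul hD_pow hD_comm hP_mul
    ((isSelfAdjoint_iff_transpose_eq _).2 hP_symm)

theorem stmt7 {n m : ℕ} (A D P C : Mat n) (hm : MatIndex A m)
    (hD : IsDrazin m A D) (hP : IsMP (A ^ m) P) (hC : IsCEP m A C) :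
    C = D * A ^ m * P :=
  stmt7_general A D P C hD hP hC
end

section
/- Let Â = A + εB be a dual real n×n matrix with index of A equal to m, such that the dual core-EP inverse Â^⊕ exists and Â^⊕ = A^⊕ − ε A^⊕ B A^⊕. Then the dual range spaces satisfy R(Â^⊕) = R(Â^m), where for a dual matrix M̂ = M + εM₀, R(M̂) = { M z + ε(M w + M₀ z) : z, w ∈ ℝⁿ }. -/
open Matrix

/-- A dual vector `x + ε x₀` represented as the pair `(x, x₀)`. -/
abbrev DV (n : ℕ) := (Fin n → ℝ) × (Fin n → ℝ)

/-- Action of a dual matrix on a dual vector. -/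
def dmulVec {n : ℕ} (M : DM n) (x : DV n) : DV n :=
  (M.1.mulVec x.1, M.1.mulVec x.2 + M.2.mulVec x.1)

/-- Dual range of a dual matrix. -/
def DRange {n : ℕ} (M : DM n) : Set (DV n) :=
  {y | ∃ z w : Fin n → ℝ, y = (M.1.mulVec z, M.1.mulVec w + M.2.mulVec z)}

/-!
Right multiplication can only shrink a dual range. Iterating `Â X̂² = X̂` writes `X̂` as `Â^m P̂`,
and `X̂ Â^(m+1) = Â^m` writes `Â^m` as `X̂ Q̂`, so each range contains the other.
-/

section DualMatrix

variable {n : ℕ}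

lemma dmul_assoc (X Y Z : DM n) : dmul (dmul X Y) Z = dmul X (dmul Y Z) := by
  simp only [dmul, Matrix.mul_add, Matrix.add_mul, Matrix.mul_assoc, Prod.mk.injEq, true_and]
  abel

lemma one_dmul (X : DM n) : dmul (1, 0) X = X := by
  simp [dmul]

lemma dmulVec_dmul (M N : DM n) (x : DV n) :
    dmulVec (dmul M N) x = dmulVec M (dmulVec N x) := by
  simp only [dmulVec, dmul, Matrix.add_mulVec, Matrix.mulVec_add, ← Matrix.mulVec_mulVec,
    Prod.mk.injEq, true_and]
  abel

lemma dRange_eq_range_dmulVec (M : DM n) : DRange M = Set.range (dmulVec M) := by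
  ext y
  simp [DRange, dmulVec, eq_comm]

lemma dRange_dmul_subset (M N : DM n) : DRange (dmul M N) ⊆ DRange M := by
  rw [dRange_eq_range_dmulVec, dRange_eq_range_dmulVec, funext (dmulVec_dmul M N)]
  exact Set.range_comp_subset_range (dmulVec N) (dmulVec M)

lemma exists_eq_dmul_dpow_of_dmul_dmul_self {A X : DM n} (h : dmul A (dmul X X) = X) (k : ℕ) :
    ∃ P, X = dmul (dpow A k) P := by
  induction k with
  | zero => exact ⟨X, (one_dmul X).symm⟩
  | succ k ih =>
    obtain ⟨P, hP⟩ := ih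
    refine ⟨dmul P X, ?_⟩
    calc X = dmul A (dmul (dmul (dpow A k) P) X) := by rw [← hP, h]
      _ = dmul (dpow A (k + 1)) (dmul P X) := by simp only [dpow, dmul_assoc]

lemma IsDualCEP.dRange_eq {m : ℕ} {A X : DM n} (h : IsDualCEP m A X) :
    DRange X = DRange (dpow A m) := by
  obtain ⟨-, hpow, hinv⟩ := h
  obtain ⟨P, hP⟩ := exists_eq_dmul_dpow_of_dmul_dmul_self hpow m
  refine Set.Subset.antisymm ?_ ?_
  · rw [hP]
    exact dRange_dmul_subset _ _
  · rw [← hinv]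
    exact dRange_dmul_subset _ _

end DualMatrix

theorem stmt14_general {n m : ℕ} (A B : Mat n)
    (Ac : Mat n)
    (hXh : IsDualCEP m (A, B) (Ac, -(Ac * B * Ac))) :
    DRange ((Ac, -(Ac * B * Ac)) : DM n) = DRange (dpow (A, B) m) :=
  hXh.dRange_eq

theorem stmt14 {n m : ℕ} (A B : Mat n) (hm : MatIndex A m)
    (Ac : Mat n) (hAc : IsCEP m A Ac)
    (hXh : IsDualCEP m (A, B) (Ac, -(Ac * B * Ac))) :
    DRange ((Ac, -(Ac * B * Ac)) : DM n) = DRange (dpow (A, B) m) :=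
  stmt14_general A B Ac hXh
end

section
/- Let Â = A + εB be a dual real n×n matrix with index of A equal to m, and suppose both the dual core-EP inverse Â^⊕ and the dual Drazin inverse Â^D exist. Then for any dual vector b̂ the dual linear system Â^{m+1} x̂ = Â^{2m}(Â^m)^† b̂ is consistent, and its general solution is x̂ = Â^⊕ b̂ + (I − Â^D Â) ŷ where ŷ ranges over all dual vectors; in particular, every solution has this form and every dual vector of this form is a solution. -/
open Matrix

/-- `Xh` is a dual Drazin inverse of the dual matrix `Ah`. -/
def IsDualDrazin {n : ℕ} (m : ℕ) (Ah Xh : DM n) : Prop :=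
  dmul Xh (dpow Ah (m+1)) = dpow Ah m ∧ dmul (dmul Xh Ah) Xh = Xh ∧
    dmul Ah Xh = dmul Xh Ah

/-- `Xh` is a dual Moore-Penrose inverse of the dual matrix `Mh`. -/
def IsDualMP {n : ℕ} (Mh Xh : DM n) : Prop :=
  dmul (dmul Mh Xh) Mh = Mh ∧ dmul (dmul Xh Mh) Xh = Xh ∧
    dT (dmul Mh Xh) = dmul Mh Xh ∧ dT (dmul Xh Mh) = dmul Xh Mh

/-!
Viewed in the ring `DualNumber (Mat n)`, with transposition as involution, the argument is purely
ring-theoretic. With `a = A + εB`, `d` its Drazin and `c` its core-EP inverse, the core-EP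
equations give `a c a^m = a^m` and `a c = a^m (a c^(m+1))`; hence the self-adjoint elements
`a^m p` and `a c` absorb each other and are equal. So `a^(2m) p b = a^(m+1) (c b)`, and the
system says `a^(m+1) (x - c b) = 0`. Since `d a = d^(m+1) a^(m+1)` and `a^(m+1) (1 - d a) = 0`,
the kernel of `a^(m+1)` is exactly the range of `1 - d a`.
-/

theorem IsSelfAdjoint.eq_of_mul_eq_of_mul_eq {R : Type*} [Monoid R] [StarMul R] {e f : R}
    (he : IsSelfAdjoint e) (hf : IsSelfAdjoint f) (hfe : f * e = e) (hef : e * f = f) :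
    e = f :=
  calc e = star (f * e) := by rw [hfe, he.star_eq]
    _ = e * f := by rw [star_mul, he.star_eq, hf.star_eq]
    _ = f := hef

section GeneralizedInverses

variable {R : Type*} {m : ℕ}

structure IsDrazinInverse [Monoid R] (m : ℕ) (a d : R) : Prop where
  mul_pow_succ : d * a ^ (m + 1) = a ^ m
  mul_mul_self : d * a * d = d
  commute : Commute a d

structure IsCoreEPInverse_s18 [Monoid R] [Star R] (m : ℕ) (a c : R) : Prop where
  isSelfAdjoint_mul : IsSelfAdjoint (a * c)
  mul_mul_self : a * (c * c) = c
  mul_pow_succ : c * a ^ (m + 1) = a ^ m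

namespace IsDrazinInverse

variable {a d : R}

theorem pow_succ_mul [Monoid R] (hd : IsDrazinInverse m a d) : a ^ (m + 1) * d = a ^ m :=
  ((hd.commute.pow_left _).eq).trans hd.mul_pow_succ

theorem pow_succ_mul_pow_succ [Monoid R] (hd : IsDrazinInverse m a d) (k : ℕ) :
    d ^ (k + 1) * a ^ (k + 1) = d * a := by
  induction k with
  | zero => simp
  | succ k ih =>
    calc d ^ (k + 2) * a ^ (k + 2) = d * (d ^ (k + 1) * a ^ (k + 1)) * a := by
          rw [pow_succ' d, pow_succ a]; simp only [mul_assoc]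
      _ = d * (a * d) * a := by rw [ih, hd.commute.eq]
      _ = d * a := by rw [← mul_assoc, hd.mul_mul_self]

theorem pow_succ_mul_one_sub_mul [Ring R] (hd : IsDrazinInverse m a d) :
    a ^ (m + 1) * (1 - d * a) = 0 := by
  rw [mul_sub, mul_one, ← mul_assoc, hd.pow_succ_mul, ← pow_succ, sub_self]

theorem pow_succ_smul_eq_zero_iff [Ring R] {V : Type*} [AddCommGroup V] [Module R V]
    (hd : IsDrazinInverse m a d) (z : V) :
    a ^ (m + 1) • z = 0 ↔ ∃ y : V, z = (1 - d * a) • y := by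
  constructor
  · intro hz
    refine ⟨z, ?_⟩
    rw [sub_smul, one_smul, ← hd.pow_succ_mul_pow_succ m, mul_smul, hz, smul_zero, sub_zero]
  · rintro ⟨y, rfl⟩
    rw [smul_smul, hd.pow_succ_mul_one_sub_mul, zero_smul]

end IsDrazinInverse

namespace IsCoreEPInverse_s18

variable {a c d p : R}

theorem pow_mul_mul_pow [Monoid R] [Star R] (hc : IsCoreEPInverse_s18 m a c) (k : ℕ) :
    a ^ k * (c * c ^ k) = c := by
  induction k with
  | zero => simp
  | succ k ih =>
    calc a ^ (k + 1) * (c * c ^ (k + 1)) = a ^ k * (a * (c * c) * c ^ k) := by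
          rw [pow_succ a, pow_succ' c]; simp only [mul_assoc]
      _ = c := by rw [hc.mul_mul_self, ih]

theorem mul_mul_pow [Monoid R] [Star R] (hc : IsCoreEPInverse_s18 m a c)
    (hd : IsDrazinInverse m a d) : a * c * a ^ m = a ^ m :=
  calc a * c * a ^ m = a * (c * a ^ (m + 1)) * d := by
        rw [← hd.pow_succ_mul]; simp only [mul_assoc]
    _ = a ^ m := by rw [hc.mul_pow_succ, ← pow_succ', hd.pow_succ_mul]

theorem pow_mul_eq_mul [Monoid R] [StarMul R] (hc : IsCoreEPInverse_s18 m a c)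
    (hd : IsDrazinInverse m a d) (hp : a ^ m * p * a ^ m = a ^ m)
    (hp' : IsSelfAdjoint (a ^ m * p)) : a ^ m * p = a * c := by
  have hac : a * c = a ^ m * (a * (c * c ^ m)) := by
    rw [← (Commute.self_pow a m).left_comm, hc.pow_mul_mul_pow]
  refine hp'.eq_of_mul_eq_of_mul_eq hc.isSelfAdjoint_mul ?_ ?_
  · rw [← mul_assoc, hc.mul_mul_pow hd]
  · rw [hac, ← mul_assoc, hp]

theorem pow_two_mul_mul_eq_pow_succ_mul [Monoid R] [StarMul R] (hc : IsCoreEPInverse_s18 m a c)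
    (hd : IsDrazinInverse m a d) (hp : a ^ m * p * a ^ m = a ^ m)
    (hp' : IsSelfAdjoint (a ^ m * p)) : a ^ (2 * m) * p = a ^ (m + 1) * c := by
  rw [two_mul, pow_add, mul_assoc, hc.pow_mul_eq_mul hd hp hp', ← mul_assoc, ← pow_succ]

theorem pow_succ_smul_eq_iff [Ring R] [StarMul R] {V : Type*} [AddCommGroup V] [Module R V]
    (hc : IsCoreEPInverse_s18 m a c) (hd : IsDrazinInverse m a d)
    (hp : a ^ m * p * a ^ m = a ^ m) (hp' : IsSelfAdjoint (a ^ m * p)) (b x : V) :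
    a ^ (m + 1) • x = (a ^ (2 * m) * p) • b ↔ ∃ y : V, x = c • b + (1 - d * a) • y := by
  rw [hc.pow_two_mul_mul_eq_pow_succ_mul hd hp hp', mul_smul, ← sub_eq_zero, ← smul_sub,
    hd.pow_succ_smul_eq_zero_iff]
  simp only [sub_eq_iff_eq_add']

end IsCoreEPInverse_s18

end GeneralizedInverses

open TrivSqZeroExt

namespace DualNumber

variable {R : Type*} [Semiring R] [StarRing R]

instance : Star (DualNumber R) := ⟨fun x => (star x.fst, star x.snd)⟩

@[simp] theorem fst_star (x : DualNumber R) : (star x).fst = star x.fst := rfl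

@[simp] theorem snd_star (x : DualNumber R) : (star x).snd = star x.snd := rfl

instance : StarMul (DualNumber R) where
  star_involutive x := ext (star_star _) (star_star _)
  star_mul x y := ext (by simp) (by simp [add_comm])

end DualNumber

namespace DM

variable {n : ℕ}

instance : SMul (DualNumber (Mat n)) (DV n) :=
  ⟨fun M x => (M.fst *ᵥ x.1, M.fst *ᵥ x.2 + M.snd *ᵥ x.1)⟩

theorem smul_def (M : DualNumber (Mat n)) (x : DV n) :
    M • x = (M.fst *ᵥ x.1, M.fst *ᵥ x.2 + M.snd *ᵥ x.1) := rfl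

instance : Module (DualNumber (Mat n)) (DV n) where
  one_smul x := by simp [smul_def]
  mul_smul M N x := by
    simp [smul_def, add_mulVec, mulVec_add, mulVec_mulVec, add_assoc]
  smul_zero M := by simp [smul_def]
  smul_add M x y := by simp [smul_def, mulVec_add]; abel
  add_smul M N x := by simp [smul_def, add_mulVec]; abel
  zero_smul x := by simp [smul_def]

/-- `DualNumber (Mat n)` is `Mat n × Mat n` with `dmul` as multiplication; `toDual` only changes
the type. -/
def toDual (X : DM n) : DualNumber (Mat n) := (X.1, X.2)

@[simp] theorem fst_toDual (X : DM n) : (toDual X).fst = X.1 := rfl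

@[simp] theorem snd_toDual (X : DM n) : (toDual X).snd = X.2 := rfl

theorem toDual_dmul (X Y : DM n) : toDual (dmul X Y) = toDual X * toDual Y := rfl

theorem toDual_sub (X Y : DM n) : toDual (X - Y) = toDual X - toDual Y := rfl

theorem toDual_one : toDual ((1, 0) : DM n) = 1 := rfl

theorem dmulVec_eq_smul (M : DM n) (x : DV n) : dmulVec M x = toDual M • x := rfl

theorem toDual_dpow (X : DM n) (k : ℕ) : toDual (dpow X k) = toDual X ^ k := by
  induction k with
  | zero => rfl
  | succ k ih => rw [pow_succ', ← ih]; rfl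

theorem toDual_dT (X : DM n) : toDual (dT X) = star (toDual X) := by
  ext1 <;> simp [dT, star_eq_conjTranspose, conjTranspose_eq_transpose_of_trivial]

theorem _root_.IsDualDrazin.isDrazinInverse_toDual {m : ℕ} {Ah Xh : DM n}
    (h : IsDualDrazin m Ah Xh) : IsDrazinInverse m (toDual Ah) (toDual Xh) where
  mul_pow_succ := by simpa only [toDual_dmul, toDual_dpow] using congrArg toDual h.1
  mul_mul_self := by simpa only [toDual_dmul] using congrArg toDual h.2.1
  commute := show toDual Ah * toDual Xh = toDual Xh * toDual Ah by
    simpa only [toDual_dmul] using congrArg toDual h.2.2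

theorem _root_.IsDualCEP.isCoreEPInverse_toDual {m : ℕ} {Ah Xh : DM n}
    (h : IsDualCEP m Ah Xh) : IsCoreEPInverse_s18 m (toDual Ah) (toDual Xh) where
  isSelfAdjoint_mul := show star (toDual Ah * toDual Xh) = _ by
    simpa only [toDual_dT, toDual_dmul] using congrArg toDual h.1
  mul_mul_self := by simpa only [toDual_dmul] using congrArg toDual h.2.1
  mul_pow_succ := by simpa only [toDual_dmul, toDual_dpow] using congrArg toDual h.2.2

theorem _root_.IsDualMP.toDual_mul_mul_self {Mh Xh : DM n} (h : IsDualMP Mh Xh) :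
    toDual Mh * toDual Xh * toDual Mh = toDual Mh := by
  simpa only [toDual_dmul] using congrArg toDual h.1

theorem _root_.IsDualMP.isSelfAdjoint_toDual_mul {Mh Xh : DM n} (h : IsDualMP Mh Xh) :
    IsSelfAdjoint (toDual Mh * toDual Xh) := show star (toDual Mh * toDual Xh) = _ by
  simpa only [toDual_dT, toDual_dmul] using congrArg toDual h.2.2.1

end DM

open DM

theorem stmt18_general {n m : ℕ} (A B : Mat n)
    (Dh Ch Ph : DM n)
    (hD : IsDualDrazin m (A, B) Dh) (hC : IsDualCEP m (A, B) Ch)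
    (hP : IsDualMP (dpow (A, B) m) Ph) :
    ∀ b x : DV n,
      dmulVec (dpow (A, B) (m+1)) x =
          dmulVec (dmul (dpow (A, B) (2 * m)) Ph) b ↔
        ∃ y : DV n,
          x = dmulVec Ch b +
              dmulVec ((((1 : Mat n), (0 : Mat n)) : DM n) - dmul Dh (A, B)) y := by
  intro b x
  have hP₁ := hP.toDual_mul_mul_self
  have hP₃ := hP.isSelfAdjoint_toDual_mul
  rw [toDual_dpow] at hP₁ hP₃
  simpa only [dmulVec_eq_smul, toDual_dmul, toDual_sub, toDual_one, toDual_dpow] using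
    hC.isCoreEPInverse_toDual.pow_succ_smul_eq_iff hD.isDrazinInverse_toDual hP₁ hP₃ b x

theorem stmt18 {n m : ℕ} (A B : Mat n) (hm : MatIndex A m)
    (Dh Ch Ph : DM n)
    (hD : IsDualDrazin m (A, B) Dh) (hC : IsDualCEP m (A, B) Ch)
    (hP : IsDualMP (dpow (A, B) m) Ph) :
    ∀ b x : DV n,
      dmulVec (dpow (A, B) (m+1)) x =
          dmulVec (dmul (dpow (A, B) (2 * m)) Ph) b ↔
        ∃ y : DV n,
          x = dmulVec Ch b +
              dmulVec ((((1 : Mat n), (0 : Mat n)) : DM n) - dmul Dh (A, B)) y :=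
  stmt18_general A B Dh Ch Ph hD hC hP
end
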